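/- arXiv:2306.04077 — 6 statements merged into one kernel-verified Lean document; each statement's English description precedes it below -/
import Mathlib

section
/- Let $\Phi: M_d \to M_d$ be a unital quantum channel with Kraus operators $\{K_i\}$, and suppose $X \in M_d$ satisfies $\Phi(X) = \lambda X$ with $|\lambda| = 1$. Then $K_i X = \lambda X K_i$ for all $i$. -/
open Matrix

/-! With `Aᵢ = Kᵢ X - λ X Kᵢ`, expand `∑ᵢ tr (Aᵢ Aᵢᴴ)`. Trace preservation and unitality turn
the two square terms into `tr (X Xᴴ)` each, and the cross terms are `tr (Φ(X) Xᴴ) = λ tr (X Xᴴ)`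
and its conjugate. Since `|λ| = 1` the sum is `0`, and a sum of traces of the positive
semidefinite matrices `Aᵢ Aᵢᴴ` vanishes only if every `Aᵢ` does. -/

section KrausFamily

variable {𝕜 m n ι : Type*} [RCLike 𝕜] [Fintype m] [Fintype n] [Fintype ι]

open scoped ComplexOrder in
theorem Matrix.sum_trace_mul_conjTranspose_self_eq_zero_iff {A : ι → Matrix m n 𝕜} :
    ∑ i, (A i * (A i)ᴴ).trace = 0 ↔ ∀ i, A i = 0 := by
  rw [Fintype.sum_eq_zero_iff_of_nonneg
    fun i ↦ (posSemidef_self_mul_conjTranspose _).trace_nonneg]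
  simp only [funext_iff, Pi.zero_apply, trace_mul_conjTranspose_self_eq_zero_iff]

theorem Matrix.trace_mul_conjTranspose_swap (A B : Matrix m n 𝕜) :
    (B * Aᴴ).trace = star (A * Bᴴ).trace := by
  rw [← trace_conjTranspose, conjTranspose_mul, conjTranspose_conjTranspose]

theorem Matrix.trace_sub_smul_mul_conjTranspose_sub_smul (A B : Matrix m n 𝕜) (c : 𝕜) :
    ((A - c • B) * (A - c • B)ᴴ).trace =
      (A * Aᴴ).trace - star c * (A * Bᴴ).trace - c * star (A * Bᴴ).trace
        + c * star c * (B * Bᴴ).trace := by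
  simp only [conjTranspose_sub, conjTranspose_smul, Matrix.sub_mul, Matrix.mul_sub,
    Matrix.smul_mul, Matrix.mul_smul, trace_sub, trace_smul, smul_eq_mul,
    trace_mul_conjTranspose_swap A B]
  ring

variable [DecidableEq m] {K : ι → Matrix m m 𝕜}

theorem sum_trace_kraus_mul_mul_conjTranspose (htp : ∑ i, (K i)ᴴ * K i = 1)
    (X : Matrix m n 𝕜) : ∑ i, (K i * X * (K i * X)ᴴ).trace = (X * Xᴴ).trace := by
  simp_rw [trace_mul_comm (K _ * X), conjTranspose_mul, Matrix.mul_assoc, ← trace_sum,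
    ← Matrix.mul_sum, ← Matrix.mul_assoc, ← Matrix.sum_mul, htp, Matrix.one_mul,
    trace_mul_comm Xᴴ]

theorem sum_trace_mul_kraus_mul_conjTranspose (hu : ∑ i, K i * (K i)ᴴ = 1)
    (X : Matrix n m 𝕜) : ∑ i, (X * K i * (X * K i)ᴴ).trace = (X * Xᴴ).trace := by
  simp_rw [← trace_sum, conjTranspose_mul, Matrix.mul_assoc, ← Matrix.mul_sum,
    ← Matrix.mul_assoc, ← Matrix.sum_mul, hu, Matrix.one_mul]

theorem kraus_mul_eq_smul_mul_kraus_of_eigenvector (htp : ∑ i, (K i)ᴴ * K i = 1)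
    (hu : ∑ i, K i * (K i)ᴴ = 1) {X : Matrix m m 𝕜} {c : 𝕜} (hc : ‖c‖ = 1)
    (heig : ∑ i, K i * X * (K i)ᴴ = c • X) (i : ι) : K i * X = c • (X * K i) := by
  have hcross : ∑ i, (K i * X * (X * K i)ᴴ).trace = c * (X * Xᴴ).trace := by
    simp_rw [conjTranspose_mul, ← Matrix.mul_assoc, ← trace_sum, ← Matrix.sum_mul, heig,
      Matrix.smul_mul, trace_smul, smul_eq_mul]
  have hcc : c * star c = 1 := by
    rw [RCLike.star_def, RCLike.mul_conj, hc]
    norm_num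
  have hdefect :
      ∑ i, ((K i * X - c • (X * K i)) * (K i * X - c • (X * K i))ᴴ).trace = 0 := by
    simp_rw [trace_sub_smul_mul_conjTranspose_sub_smul, Finset.sum_add_distrib,
      Finset.sum_sub_distrib, ← Finset.mul_sum, ← star_sum, hcross,
      sum_trace_kraus_mul_mul_conjTranspose htp, sum_trace_mul_kraus_mul_conjTranspose hu,
      star_mul', ← trace_mul_conjTranspose_swap X X]
    linear_combination -(X * Xᴴ).trace * hcc
  exact sub_eq_zero.mp (sum_trace_mul_conjTranspose_self_eq_zero_iff.mp hdefect i)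

end KrausFamily

/-- If `Φ(X) = ∑ᵢ Kᵢ X Kᵢ*` is a unital quantum channel and `Φ(X) = λ X` with `|λ| = 1`,
then `Kᵢ X = λ X Kᵢ` for every Kraus operator `Kᵢ`. -/
theorem kraus_commute_of_peripheral_eigenvector (d n : ℕ)
    (K : Fin n → Matrix (Fin d) (Fin d) ℂ)
    (Φ : Matrix (Fin d) (Fin d) ℂ → Matrix (Fin d) (Fin d) ℂ)
    (hΦ : ∀ Y, Φ Y = ∑ i, K i * Y * (K i)ᴴ)
    (htp : ∑ i, (K i)ᴴ * K i = 1)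
    (hunital : ∑ i, K i * (K i)ᴴ = 1)
    (X : Matrix (Fin d) (Fin d) ℂ) (lam : ℂ) (hlam : ‖lam‖ = 1)
    (heig : Φ X = lam • X) :
    ∀ i, K i * X = lam • (X * K i) :=
  kraus_mul_eq_smul_mul_kraus_of_eigenvector htp hunital hlam (hΦ X ▸ heig)
end

section
/- Let $\Phi: M_d \to M_d$ be a unital quantum channel and let $X$ satisfy $\Phi(X) = \lambda X$ with $|\lambda| = 1$. Then $\Phi(XX^*) = XX^*$, i.e., $XX^*$ is a fixed point of $\Phi$. -/
/-!
With `A i = K i * X - λ • (X * K i)`, expanding and using `Φ X = λ X`, `Φ(Xᴴ) = λ̄ Xᴴ`,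
`Φ 1 = 1` and `|λ| = 1` gives `∑ i, A i * (A i)ᴴ = Φ (X Xᴴ) - X Xᴴ`. The left side is positive
semidefinite, and the right side has trace zero because `Φ` preserves the trace; a positive
semidefinite matrix of trace zero vanishes.
-/

open Matrix
open scoped ComplexOrder

namespace Matrix

variable {ι n R : Type*} [Fintype ι] [Fintype n]

theorem trace_sum_mul_mul_conjTranspose [DecidableEq n] [CommSemiring R] [StarRing R]
    {K : ι → Matrix n n R} (hK : ∑ i, (K i)ᴴ * K i = 1) (Y : Matrix n n R) :
    (∑ i, K i * Y * (K i)ᴴ).trace = Y.trace := by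
  simp_rw [trace_sum, trace_mul_cycle _ Y, ← trace_sum, ← Finset.sum_mul, hK, one_mul]

theorem sum_twistedCommutator_mul_conjTranspose [DecidableEq n] [CommRing R] [StarRing R]
    {K : ι → Matrix n n R} (hK : ∑ i, K i * (K i)ᴴ = 1) {X : Matrix n n R} {lam : R}
    (hlam : lam * star lam = 1) (heig : ∑ i, K i * X * (K i)ᴴ = lam • X) :
    ∑ i, (K i * X - lam • (X * K i)) * (K i * X - lam • (X * K i))ᴴ =
      ∑ i, K i * (X * Xᴴ) * (K i)ᴴ - X * Xᴴ := by
  have heig_conj : ∑ i, K i * Xᴴ * (K i)ᴴ = star lam • Xᴴ := by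
    simpa [conjTranspose_sum, mul_assoc] using congrArg conjTranspose heig
  have expand : ∀ i, (K i * X - lam • (X * K i)) * (K i * X - lam • (X * K i))ᴴ =
      K i * (X * Xᴴ) * (K i)ᴴ - star lam • (K i * X * (K i)ᴴ * Xᴴ)
        - lam • (X * (K i * Xᴴ * (K i)ᴴ)) + (lam * star lam) • (X * (K i * (K i)ᴴ) * Xᴴ) := by
    intro i
    simp only [conjTranspose_sub, conjTranspose_smul, conjTranspose_mul, sub_mul, mul_sub,
      smul_mul_assoc, mul_smul_comm, smul_smul, smul_sub, mul_assoc]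
    module
  simp only [expand, Finset.sum_add_distrib, Finset.sum_sub_distrib, ← Finset.smul_sum,
    ← Finset.sum_mul, ← Finset.mul_sum, heig, heig_conj, hK, hlam]
  simp only [smul_mul_assoc, mul_smul_comm, smul_smul, mul_comm (star lam), hlam, one_smul,
    mul_one]
  abel

end Matrix

/-- If `Φ` is a unital quantum channel and `Φ(X) = λ X` with `|λ| = 1`,
then `X X*` is a fixed point of `Φ`. -/
theorem peripheral_eigenvector_XXstar_fixed (d n : ℕ)
    (K : Fin n → Matrix (Fin d) (Fin d) ℂ)
    (Φ : Matrix (Fin d) (Fin d) ℂ → Matrix (Fin d) (Fin d) ℂ)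
    (hΦ : ∀ Y, Φ Y = ∑ i, K i * Y * (K i)ᴴ)
    (htp : ∑ i, (K i)ᴴ * K i = 1)
    (hunital : ∑ i, K i * (K i)ᴴ = 1)
    (X : Matrix (Fin d) (Fin d) ℂ) (lam : ℂ) (hlam : ‖lam‖ = 1)
    (heig : Φ X = lam • X) :
    Φ (X * Xᴴ) = X * Xᴴ := by
  have hlam' : lam * star lam = 1 := by
    rw [Complex.star_def, Complex.mul_conj', hlam]
    norm_num
  have hsum : Φ (X * Xᴴ) - X * Xᴴ =
      ∑ i, (K i * X - lam • (X * K i)) * (K i * X - lam • (X * K i))ᴴ := by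
    rw [sum_twistedCommutator_mul_conjTranspose hunital hlam' (by rw [← hΦ, heig]), hΦ]
  have hpsd : (Φ (X * Xᴴ) - X * Xᴴ).PosSemidef :=
    hsum ▸ posSemidef_sum _ fun i _ => posSemidef_self_mul_conjTranspose _
  have htrace : (Φ (X * Xᴴ) - X * Xᴴ).trace = 0 := by
    rw [trace_sub, hΦ, trace_sum_mul_mul_conjTranspose htp, sub_self]
  exact sub_eq_zero.mp (hpsd.trace_eq_zero_iff.mp htrace)
end

section
/- For every $d \times d$ correlation matrix $C$, the matrix $\frac{1}{d} C + \frac{d-1}{d} I_d$ lies in the convex hull of rank-one correlation matrices $zz^*$ with $|z_i| = 1$ for all $i$. -/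
/-!
Average `⟨z, C z⟩ • z z*` over the vectors `z` whose coordinates are independent uniformly
distributed `N`-th roots of unity, `N ≥ 3` (a finite stand-in for Haar measure on the torus).
The moment `𝔼[z_i z_l z̄_j z̄_k]` is `1` when `{i, l} = {j, k}` as multisets and `0` otherwise,
so the average is `C + (tr C) I - diag C`, which for a correlation matrix is
`d • ((1/d) C + ((d-1)/d) I)`. The weights `⟨z, C z⟩` are nonnegative since `C` is positive
semidefinite, and they average to `tr C = d`.
-/

open Matrix Finset ZMod
open scoped ComplexOrder

lemma forall_add_sub_sub_eq_zero_iff {ι : Type*} {N : ℕ} (hN : 2 < N) (i j k l : ι) :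
    (∀ f : ι → ZMod N, f i + f l - f j - f k = 0) ↔ (i = j ∧ k = l) ∨ (i = k ∧ j = l) := by
  classical
  refine ⟨fun h => ?_, by rintro (⟨rfl, rfl⟩ | ⟨rfl, rfl⟩) f <;> abel⟩
  have cast_ne_zero {n : ℕ} (hn₀ : 0 < n) (hn : n < N) : (n : ZMod N) ≠ 0 := by
    rw [Ne, ZMod.natCast_eq_zero_iff]
    exact Nat.not_dvd_of_pos_of_lt hn₀ hn
  have one_ne : (1 : ZMod N) ≠ 0 := by exact_mod_cast cast_ne_zero one_pos (by omega)
  have two_ne : (1 + 1 : ZMod N) ≠ 0 := by exact_mod_cast cast_ne_zero two_pos hN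
  -- Testing against the indicator of `i` and of `l` already detects every failure.
  have hi := h (Pi.single i 1)
  have hl := h (Pi.single l 1)
  simp only [Pi.single_apply] at hi hl
  by_cases hij : i = j
  · subst hij
    by_cases hkl : k = l
    · exact .inl ⟨rfl, hkl⟩
    · simp [hkl, one_ne] at hl
  by_cases hik : i = k
  · subst hik
    by_cases hjl : j = l
    · exact .inr ⟨rfl, hjl⟩
    · simp [hjl, one_ne] at hl
  by_cases hli : l = i <;> simp [hli, Ne.symm hij, Ne.symm hik, one_ne, two_ne] at hi

lemma sum_stdAddChar_add_sub_sub {ι : Type*} [Fintype ι] [DecidableEq ι] {N : ℕ} [NeZero N]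
    (hN : 2 < N) (i j k l : ι) :
    ∑ f : ι → ZMod N, stdAddChar (f i + f l - f j - f k) =
      if (i = j ∧ k = l) ∨ (i = k ∧ j = l) then (N : ℂ) ^ Fintype.card ι else 0 := by
  let e : (ι → ZMod N) →+ ZMod N :=
    Pi.evalAddMonoidHom (fun _ => ZMod N) i + Pi.evalAddMonoidHom (fun _ => ZMod N) l -
      Pi.evalAddMonoidHom (fun _ => ZMod N) j - Pi.evalAddMonoidHom (fun _ => ZMod N) k
  have htrivial : stdAddChar.compAddMonoidHom e = 0 ↔ (i = j ∧ k = l) ∨ (i = k ∧ j = l) := by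
    rw [AddChar.eq_zero_iff, ← forall_add_sub_sub_eq_zero_iff hN]
    refine forall_congr' fun f => ?_
    rw [AddChar.compAddMonoidHom_apply, ← (stdAddChar (N := N)).map_zero_eq_one,
      (injective_stdAddChar (N := N)).eq_iff]
    rfl
  classical
  simpa [htrivial, e] using AddChar.sum_eq_ite (stdAddChar.compAddMonoidHom e)

lemma Matrix.sum_sum_ite_pairing {ι : Type*} [Fintype ι] [DecidableEq ι] (C : Matrix ι ι ℂ)
    (i j : ι) :
    ∑ k, ∑ l, (if (i = j ∧ k = l) ∨ (i = k ∧ j = l) then C k l else 0) =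
      C i j + diagonal (fun i => C.trace - C i i) i j := by
  by_cases hij : i = j
  · subst hij
    have hpair : ∀ k l : ι, (k = l ∨ i = k ∧ i = l) ↔ k = l :=
      fun k l => or_iff_left_of_imp fun h => h.1.symm.trans h.2
    simp [hpair, diagonal, trace]
  · simp [hij, diagonal, ite_and]

section phaseVector

variable {ι : Type*} {N : ℕ} [NeZero N]

noncomputable def phaseVector (f : ι → ZMod N) : ι → ℂ := fun c => stdAddChar (f c)

lemma norm_phaseVector (f : ι → ZMod N) (c : ι) : ‖phaseVector f c‖ = 1 :=
  Circle.norm_coe _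

lemma phaseVector_mul_star_self (f : ι → ZMod N) (c : ι) :
    phaseVector f c * star (phaseVector f c) = 1 := by
  rw [RCLike.star_def, Complex.mul_conj', norm_phaseVector, Complex.ofReal_one, one_pow]

lemma star_phaseVector (f : ι → ZMod N) : star (phaseVector f) = phaseVector (-f) := by
  ext c
  simp [phaseVector, AddChar.map_neg_eq_conj]

lemma sum_quadForm_smul_vecMulVec_phaseVector [Fintype ι] [DecidableEq ι] (hN : 2 < N)
    (C : Matrix ι ι ℂ) :
    ∑ f : ι → ZMod N, (star (phaseVector f) ⬝ᵥ C *ᵥ phaseVector f) •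
        vecMulVec (phaseVector f) (star (phaseVector f)) =
      (N ^ Fintype.card ι : ℂ) • (C + diagonal fun i => C.trace - C i i) := by
  ext i j
  calc _ = ∑ k, ∑ l, C k l * ∑ f : ι → ZMod N, stdAddChar (f i + f l - f j - f k) := by
        simp only [Matrix.sum_apply, Matrix.smul_apply, vecMulVec_apply, star_phaseVector,
          dotProduct, mulVec, sum_mul, mul_sum, smul_eq_mul]
        rw [sum_comm]
        refine sum_congr rfl fun k _ => ?_
        rw [sum_comm]
        refine sum_congr rfl fun l _ => sum_congr rfl fun f _ => ?_
        simp only [phaseVector, Pi.neg_apply, sub_eq_add_neg, AddChar.map_add_eq_mul]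
        ring
    _ = _ := by
        simp_rw [sum_stdAddChar_add_sub_sub hN, mul_ite, mul_zero, ← ite_zero_mul, ← sum_mul,
          sum_sum_ite_pairing, Matrix.smul_apply, Matrix.add_apply, smul_eq_mul, mul_comm]

end phaseVector

lemma sum_smul_mem_convexHull_of_nonneg {ι E : Type*} [Fintype ι] [AddCommGroup E]
    [Module ℝ E] [Module ℂ E] [IsScalarTower ℝ ℂ E] {s : Set E} {w : ι → ℂ} {v : ι → E}
    (hw₀ : ∀ i, 0 ≤ w i) (hw₁ : ∑ i, w i = 1) (hv : ∀ i, v i ∈ s) :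
    ∑ i, w i • v i ∈ convexHull ℝ s := by
  have hw : ∀ i, w i = (w i).re := fun i =>
    Complex.eq_re_of_ofReal_le (by rw [Complex.ofReal_zero]; exact hw₀ i)
  have hreal : ∑ i, w i • v i = ∑ i, (w i).re • v i := sum_congr rfl fun i _ => by
    rw [← algebraMap_smul ℂ (w i).re (v i), Complex.coe_algebraMap, ← hw i]
  rw [hreal]
  refine (convex_convexHull ℝ s).sum_mem (fun i _ => ?_) ?_ fun i _ => subset_convexHull ℝ s (hv i)
  · exact (Complex.nonneg_iff.1 (hw₀ i)).1
  · rw [← Complex.re_sum, hw₁, Complex.one_re]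

/-- For every `d × d` correlation matrix `C`, the matrix `(1/d) C + ((d-1)/d) I`
lies in the convex hull of the rank-one correlation matrices `z z*` with all
`|zᵢ| = 1`. -/
theorem correlation_convex_combination_rank_one (d : ℕ)
    (C : Matrix (Fin d) (Fin d) ℂ) (hC : C.PosSemidef) (hdiag : ∀ i, C i i = 1) :
    (1 / (d : ℝ)) • C + (((d : ℝ) - 1) / d) • (1 : Matrix (Fin d) (Fin d) ℂ) ∈
      convexHull ℝ {A : Matrix (Fin d) (Fin d) ℂ |
        ∃ z : Fin d → ℂ, (∀ i, ‖z i‖ = 1) ∧ A = Matrix.of fun i j => z i * star (z j)} := by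
  rcases Nat.eq_zero_or_pos d with rfl | hd
  · exact subset_convexHull ℝ _ ⟨0, finZeroElim, Subsingleton.elim _ _⟩
  have hsum := sum_quadForm_smul_vecMulVec_phaseVector (N := 3) (by norm_num) C
  rw [Fintype.card_fin] at hsum
  have htrace : C.trace = d := by simp [trace, hdiag]
  have hweights : ∑ f : Fin d → ZMod 3, star (phaseVector f) ⬝ᵥ C *ᵥ phaseVector f = 3 ^ d * d := by
    have hentry := congrFun (congrFun hsum ⟨0, hd⟩) ⟨0, hd⟩
    simp only [Matrix.sum_apply, Matrix.smul_apply, vecMulVec_apply, Pi.star_apply,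
      phaseVector_mul_star_self, smul_eq_mul, mul_one] at hentry
    simpa [htrace, hdiag] using hentry
  have hcomb : ∑ f : Fin d → ZMod 3, (star (phaseVector f) ⬝ᵥ C *ᵥ phaseVector f / (3 ^ d * d)) •
      vecMulVec (phaseVector f) (star (phaseVector f)) =
      (1 / (d : ℝ)) • C + (((d : ℝ) - 1) / d) • (1 : Matrix (Fin d) (Fin d) ℂ) := by
    simp_rw [div_eq_inv_mul, mul_smul, ← smul_sum, hsum]
    ext i j
    by_cases hij : i = j <;> simp [hij, htrace, hdiag] <;> field_simp
  rw [← hcomb]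
  refine sum_smul_mem_convexHull_of_nonneg (fun f => ?_) ?_ fun f => ⟨phaseVector f, ?_, rfl⟩
  · exact div_nonneg (hC.dotProduct_mulVec_nonneg _) (by positivity)
  · rw [← sum_div, hweights, div_self (by positivity)]
  · exact norm_phaseVector f
end

section
/- Let $v = (v_1, \ldots, v_d) \in \mathbb{C}^d$ with $|v_k| \leq 1$ for all $k$, and let $M(v)$ be the $d \times d$ matrix whose off-diagonal entries agree with those of $vv^*$ and whose diagonal entries all equal 1. Then $M(v)$ lies in the closed convex hull of rank-one correlation matrices $zz^*$ with $|z_i| = 1$. -/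
/-!
Write `M(u)` for the matrix with unit diagonal and off-diagonal entries `u i * conj (u j)`.
For each coordinate `k`, the map `a ↦ M(u[k ↦ a])` is real-affine, since every entry is
constant or real-linear in `a`. Hence the set of `a` with `M(u[k ↦ a])` in the (convex) hull
of the rank-one correlation matrices is convex; when the other coordinates of `u` are
unimodular it contains the unit circle, hence its convex hull, the closed unit disc. Replacing
the coordinates of `v` by unimodular ones one at a time, the claim reduces to unimodular `z`,
where `M(z) = z z*`.
-/

open Matrix

namespace Matrix

variable {ι : Type*} [DecidableEq ι]

def outerWithUnitDiagonal (u : ι → ℂ) : Matrix ι ι ℂ :=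
  of fun i j => if i = j then 1 else u i * star (u j)

def rankOneCorrelations (ι : Type*) : Set (Matrix ι ι ℂ) :=
  {A | ∃ z : ι → ℂ, (∀ i, ‖z i‖ = 1) ∧ A = of fun i j => z i * star (z j)}

theorem outerWithUnitDiagonal_mem_rankOneCorrelations {z : ι → ℂ} (hz : ∀ i, ‖z i‖ = 1) :
    outerWithUnitDiagonal z ∈ rankOneCorrelations ι := by
  refine ⟨z, hz, ?_⟩
  ext i j
  rcases eq_or_ne i j with rfl | hij
  · simp [outerWithUnitDiagonal, Complex.mul_conj, Complex.normSq_eq_norm_sq, hz]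
  · simp [outerWithUnitDiagonal, hij]

theorem outerWithUnitDiagonal_update_add_smul (u : ι → ℂ) (k : ι) (a b : ℂ) {s t : ℝ}
    (hst : s + t = 1) :
    outerWithUnitDiagonal (Function.update u k (s • a + t • b)) =
      s • outerWithUnitDiagonal (Function.update u k a) +
        t • outerWithUnitDiagonal (Function.update u k b) := by
  ext i j
  rcases eq_or_ne i j with rfl | hij
  · simp only [outerWithUnitDiagonal, add_apply, smul_apply, of_apply, if_true,
      Complex.real_smul, mul_one]
    exact_mod_cast hst.symm
  obtain rfl : t = 1 - s := by linarith
  simp only [outerWithUnitDiagonal, add_apply, smul_apply, of_apply, if_neg hij,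
    Function.update_apply]
  split_ifs with hik hjk
  · exact absurd (hik.trans hjk.symm) hij
  all_goals
    simp only [Complex.real_smul, Complex.star_def, map_add, map_mul, Complex.conj_ofReal]
    push_cast
    ring

theorem convex_setOf_outerWithUnitDiagonal_update_mem {C : Set (Matrix ι ι ℂ)}
    (hC : Convex ℝ C) (u : ι → ℂ) (k : ι) :
    Convex ℝ {a | outerWithUnitDiagonal (Function.update u k a) ∈ C} := by
  intro a ha b hb s t hs ht hst
  simp only [Set.mem_ofPred_eq, outerWithUnitDiagonal_update_add_smul u k a b hst]
  exact hC ha hb hs ht hst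

theorem outerWithUnitDiagonal_mem_convexHull_of_unimodular_off {u : ι → ℂ} (s : Finset ι)
    (hu : ∀ k, ‖u k‖ ≤ 1) (hus : ∀ k ∉ s, ‖u k‖ = 1) :
    outerWithUnitDiagonal u ∈ convexHull ℝ (rankOneCorrelations ι) := by
  induction s using Finset.induction_on generalizing u with
  | empty =>
    exact subset_convexHull ℝ _
      (outerWithUnitDiagonal_mem_rankOneCorrelations fun k => hus k (Finset.notMem_empty k))
  | insert k s _ ih =>
    have hsphere : Metric.sphere 0 1 ⊆
        {a | outerWithUnitDiagonal (Function.update u k a) ∈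
          convexHull ℝ (rankOneCorrelations ι)} := by
      intro a ha
      rw [mem_sphere_zero_iff_norm] at ha
      refine ih (fun i => ?_) (fun i hi => ?_) <;> rcases eq_or_ne i k with rfl | hik
      · simp [ha]
      · simpa [hik] using hu i
      · simp [ha]
      · simpa [hik] using hus i (by simp [hik, hi])
    have hdisc := convexHull_min hsphere
      (convex_setOf_outerWithUnitDiagonal_update_mem (convex_convexHull ℝ _) u k)
    rw [convexHull_sphere_eq_closedBall 0 zero_le_one] at hdisc
    simpa using hdisc (mem_closedBall_zero_iff.mpr (hu k))

theorem outerWithUnitDiagonal_mem_convexHull [Fintype ι] {u : ι → ℂ}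
    (hu : ∀ k, ‖u k‖ ≤ 1) :
    outerWithUnitDiagonal u ∈ convexHull ℝ (rankOneCorrelations ι) :=
  outerWithUnitDiagonal_mem_convexHull_of_unimodular_off Finset.univ hu
    fun k hk => absurd (Finset.mem_univ k) hk

end Matrix

/-- If `v ∈ ℂ^d` with `|v_k| ≤ 1` for all `k`, then the matrix `M(v)` whose
off-diagonal entries agree with `v v*` and whose diagonal entries are all `1`
lies in the closed convex hull of the rank-one correlation matrices `z z*`
with all `|zᵢ| = 1`. -/
theorem Mv_mem_closed_convex_hull_rank_one (d : ℕ)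
    (v : Fin d → ℂ) (hv : ∀ k, ‖v k‖ ≤ 1)
    (M : Matrix (Fin d) (Fin d) ℂ)
    (hM : M = Matrix.of fun i j => if i = j then (1 : ℂ) else v i * star (v j)) :
    M ∈ closure (convexHull ℝ {A : Matrix (Fin d) (Fin d) ℂ |
      ∃ z : Fin d → ℂ, (∀ i, ‖z i‖ = 1) ∧ A = Matrix.of fun i j => z i * star (z j)}) := by
  subst hM
  exact subset_closure (outerWithUnitDiagonal_mem_convexHull hv)
end

section
/- Let $C$ be a $d \times d$ complex correlation matrix of rank $r$. Then $\frac{1}{r} C + \frac{r-1}{r} I_d$ lies in the closed convex hull of rank-one correlation matrices $zz^*$ with all $|z_i| = 1$. -/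
/-!
By the spectral theorem `C = ∑_{k ∈ s} v_k v_kᴴ` with `#s = rank C`, and the unit diagonal forces
`|v_k i| ≤ 1`. The matrix `M(v)` with off-diagonal part `v vᴴ` and unit diagonal is real-affine in
each coordinate of `v` separately, and the unit disc is the convex hull of the unit circle, so
moving the coordinates of `v` to the circle one at a time puts `M(v)` in the convex hull of the
rank-one correlation matrices. Finally `(1/r) ∑_k M(v_k) = (1/r) C + ((r - 1)/r) I`.
-/

open Matrix Set
open scoped ComplexOrder

theorem mem_convexHull_image_pi_of_separately_affine {ι E F : Type*} [Fintype ι] [DecidableEq ι]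
    [AddCommGroup E] [Module ℝ E] [AddCommGroup F] [Module ℝ F]
    (f : (ι → E) → F)
    (hf : ∀ w i x y (a b : ℝ), 0 ≤ a → 0 ≤ b → a + b = 1 →
      f (Function.update w i (a • x + b • y)) =
        a • f (Function.update w i x) + b • f (Function.update w i y))
    {S : ι → Set E} {w : ι → E} (hw : ∀ i, w i ∈ convexHull ℝ (S i)) :
    f w ∈ convexHull ℝ (f '' univ.pi S) := by
  suffices key : ∀ (t : Finset ι) (w : ι → E), (∀ i, w i ∈ convexHull ℝ (S i)) →
      (∀ i ∉ t, w i ∈ S i) → f w ∈ convexHull ℝ (f '' univ.pi S) from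
    key Finset.univ w hw (by simp)
  intro t
  induction t using Finset.induction_on with
  | empty => exact fun w _ hwS => subset_convexHull ℝ _ ⟨w, fun i _ => hwS i (by simp), rfl⟩
  | @insert i t hit ih =>
    intro w hw hwS
    have hconv : Convex ℝ {x | f (Function.update w i x) ∈ convexHull ℝ (f '' univ.pi S)} := by
      intro x hx y hy a b ha hb hab
      simp only [mem_ofPred_eq, hf w i x y a b ha hb hab]
      exact convex_convexHull ℝ _ hx hy ha hb hab
    have hS : S i ⊆ {x | f (Function.update w i x) ∈ convexHull ℝ (f '' univ.pi S)} := by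
      intro x hx
      refine ih _ (fun j => ?_) (fun j hj => ?_)
      · rcases eq_or_ne j i with rfl | hji
        · simpa using subset_convexHull ℝ _ hx
        · simpa [hji] using hw j
      · rcases eq_or_ne j i with rfl | hji
        · simpa using hx
        · simpa [hji] using hwS j (by simp [hji, hj])
    simpa using convexHull_min hS hconv (hw i)

section UnitDiagOuter

variable {n 𝕜 : Type*} [DecidableEq n] [RCLike 𝕜]

/-- The matrix `M(v)` of the paper. -/
def unitDiagOuter (v : n → 𝕜) : Matrix n n 𝕜 :=
  of fun i j => if i = j then 1 else v i * star (v j)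

theorem unitDiagOuter_update_smul_add_smul (w : n → 𝕜) (i : n) (x y : 𝕜) {a b : ℝ}
    (hab : a + b = 1) :
    unitDiagOuter (Function.update w i (a • x + b • y)) =
      a • unitDiagOuter (Function.update w i x) + b • unitDiagOuter (Function.update w i y) := by
  have hab' : (a : 𝕜) + b = 1 := by exact_mod_cast hab
  ext p q
  simp only [unitDiagOuter, Function.update_apply, Matrix.add_apply, Matrix.smul_apply, of_apply,
    RCLike.real_smul_eq_coe_mul]
  split_ifs with hpq hp hq hq
  · linear_combination -hab'
  · exact absurd (hp.trans hq.symm) hpq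
  · ring
  · simp only [RCLike.star_def, map_add, map_mul, RCLike.conj_ofReal]
    ring
  · linear_combination -(w p * star (w q)) * hab'

theorem unitDiagOuter_of_norm_eq_one {z : n → 𝕜} (hz : ∀ i, ‖z i‖ = 1) :
    unitDiagOuter z = of fun i j => z i * star (z j) := by
  ext i j
  by_cases hij : i = j
  · subst hij
    simp [unitDiagOuter, RCLike.mul_conj, hz]
  · simp [unitDiagOuter, hij]

theorem unitDiagOuter_mem_convexHull [Fintype n] {v : n → 𝕜} (hv : ∀ i, ‖v i‖ ≤ 1) :
    unitDiagOuter v ∈ convexHull ℝ {A : Matrix n n 𝕜 |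
        ∃ z : n → 𝕜, (∀ i, ‖z i‖ = 1) ∧ A = of fun i j => z i * star (z j)} := by
  have hdisc : ∀ i, v i ∈ convexHull ℝ (Metric.sphere (0 : 𝕜) 1) := fun i => by
    simpa [convexHull_sphere_eq_closedBall (0 : 𝕜) zero_le_one] using hv i
  refine convexHull_mono ?_ (mem_convexHull_image_pi_of_separately_affine unitDiagOuter
    (fun w i x y a b _ _ hab => unitDiagOuter_update_smul_add_smul w i x y hab) hdisc)
  rintro _ ⟨z, hz, rfl⟩
  have hz1 : ∀ i, ‖z i‖ = 1 := fun i => by simpa using hz i (mem_univ i)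
  exact ⟨z, hz1, unitDiagOuter_of_norm_eq_one hz1⟩

theorem sum_unitDiagOuter {ι : Type*} (s : Finset ι) (v : ι → n → 𝕜)
    (hdiag : ∀ i, (∑ k ∈ s, vecMulVec (v k) (star (v k))) i i = 1) :
    ∑ k ∈ s, unitDiagOuter (v k) =
      ∑ k ∈ s, vecMulVec (v k) (star (v k)) + ((s.card : ℝ) - 1) • (1 : Matrix n n 𝕜) := by
  ext i j
  rcases eq_or_ne i j with rfl | hij
  · simp [unitDiagOuter, Matrix.sum_apply, hdiag i, RCLike.real_smul_eq_coe_mul]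
  · simp [unitDiagOuter, Matrix.sum_apply, vecMulVec_apply, hij]

end UnitDiagOuter

theorem Matrix.IsHermitian.eq_sum_eigenvalues_smul_vecMulVec {n 𝕜 : Type*} [Fintype n]
    [DecidableEq n] [RCLike 𝕜] {A : Matrix n n 𝕜} (hA : A.IsHermitian) :
    A = ∑ k, (hA.eigenvalues k : 𝕜) •
      vecMulVec ⇑(hA.eigenvectorBasis k) (star ⇑(hA.eigenvectorBasis k)) := by
  ext i j
  conv_lhs => rw [hA.spectral_theorem, Unitary.conjStarAlgAut_apply]
  rw [Matrix.mul_apply, Matrix.sum_apply]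
  refine Finset.sum_congr rfl fun k _ => ?_
  simp only [mul_diagonal, eigenvectorUnitary_apply, Function.comp_apply, star_apply,
    RCLike.star_def, smul_apply, vecMulVec_apply, Pi.star_apply, smul_eq_mul]
  ring

theorem Matrix.PosSemidef.exists_sum_vecMulVec_card_eq_rank {n 𝕜 : Type*} [Fintype n]
    [DecidableEq n] [RCLike 𝕜] {A : Matrix n n 𝕜} (hA : A.PosSemidef) :
    ∃ (s : Finset n) (v : n → n → 𝕜), s.card = A.rank ∧
      A = ∑ k ∈ s, vecMulVec (v k) (star (v k)) := by
  set μ := hA.1.eigenvalues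
  set u := fun k => ⇑(hA.1.eigenvectorBasis k)
  refine ⟨({k | μ k ≠ 0} : Finset n), fun k => (√(μ k) : 𝕜) • u k, ?_, ?_⟩
  · rw [hA.1.rank_eq_card_non_zero_eigs, Fintype.card_subtype]
  · have hsq : ∀ k, (√(μ k) : 𝕜) * star (√(μ k) : 𝕜) = μ k := fun k => by
      rw [RCLike.star_def, RCLike.conj_ofReal, ← RCLike.ofReal_mul,
        Real.mul_self_sqrt (hA.eigenvalues_nonneg k)]
    rw [Finset.sum_filter_of_ne fun k _ h => by_contra fun hk => h (by simp_all)]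
    conv_lhs => rw [hA.1.eq_sum_eigenvalues_smul_vecMulVec]
    refine Finset.sum_congr rfl fun k _ => ?_
    rw [star_smul, smul_vecMulVec, vecMulVec_smul, smul_smul, hsq]

theorem norm_le_one_of_sum_vecMulVec_apply_self_eq_one {ι n 𝕜 : Type*} [RCLike 𝕜]
    {s : Finset ι} {v : ι → n → 𝕜} {i : n}
    (hi : (∑ k ∈ s, vecMulVec (v k) (star (v k))) i i = 1) {k : ι} (hk : k ∈ s) :
    ‖v k i‖ ≤ 1 := by
  have hsum : ∑ l ∈ s, ‖v l i‖ ^ 2 = 1 := by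
    have : ((∑ l ∈ s, ‖v l i‖ ^ 2 : ℝ) : 𝕜) = 1 := by
      simpa [Matrix.sum_apply, vecMulVec_apply, RCLike.mul_conj] using hi
    exact_mod_cast this
  have : ‖v k i‖ ^ 2 ≤ 1 :=
    hsum ▸ Finset.single_le_sum (fun l _ => sq_nonneg ‖v l i‖) hk
  exact (sq_le_one_iff₀ (norm_nonneg _)).1 this

/-- If `C` is a `d × d` complex correlation matrix of rank `r`, then
`(1/r) C + ((r-1)/r) I` lies in the closed convex hull of the rank-one
correlation matrices `z z*` with all `|zᵢ| = 1`. -/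
theorem rank_r_correlation_convex_combination (d r : ℕ)
    (C : Matrix (Fin d) (Fin d) ℂ) (hC : C.PosSemidef) (hdiag : ∀ i, C i i = 1)
    (hrank : C.rank = r) :
    (1 / (r : ℝ)) • C + (((r : ℝ) - 1) / r) • (1 : Matrix (Fin d) (Fin d) ℂ) ∈
      closure (convexHull ℝ {A : Matrix (Fin d) (Fin d) ℂ |
        ∃ z : Fin d → ℂ, (∀ i, ‖z i‖ = 1) ∧ A = Matrix.of fun i j => z i * star (z j)}) := by
  obtain ⟨s, v, hcard, rfl⟩ := hC.exists_sum_vecMulVec_card_eq_rank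
  subst hrank
  rw [← hcard]
  refine subset_closure ?_
  rcases s.eq_empty_or_nonempty with rfl | hs
  · have : IsEmpty (Fin d) := ⟨fun i => by simpa using hdiag i⟩
    exact subset_convexHull ℝ _ ⟨fun _ => 1, by simp, by ext i; exact isEmptyElim i⟩
  · have hcomb : (1 / (s.card : ℝ)) • ∑ k ∈ s, vecMulVec (v k) (star (v k)) +
        (((s.card : ℝ) - 1) / s.card) • (1 : Matrix (Fin d) (Fin d) ℂ) =
        s.centerMass (fun _ => (1 : ℝ)) fun k => unitDiagOuter (v k) := by
      simp only [Finset.centerMass, one_smul, Finset.sum_const, nsmul_eq_mul, mul_one,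
        sum_unitDiagOuter s v hdiag, smul_add, smul_smul, div_eq_inv_mul]
    rw [hcomb]
    exact (convex_convexHull ℝ _).centerMass_mem (fun _ _ => zero_le_one) (by simpa using hs)
      fun k hk => unitDiagOuter_mem_convexHull fun i =>
        norm_le_one_of_sum_vecMulVec_apply_self_eq_one (hdiag i) hk
end

section
/- Let $\Phi$ be a unital quantum channel on $M_d$ with Kraus operators $\{K_i\}$. Then the fixed point set $\mathrm{Fix}(\Phi) = \{X : \Phi(X) = X\}$ equals the commutant $\{K_i\}'$ of the Kraus operators; in particular, $\mathrm{Fix}(\Phi)$ is a unital $*$-subalgebra of $M_d$. -/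
open Matrix

lemma trace_conj_normSq (d : ℕ) (C : Matrix (Fin d) (Fin d) ℂ) :
    trace (Cᴴ * C) = ((∑ j, ∑ k, Complex.normSq (C k j) : ℝ) : ℂ) := by
  push_cast
  simp [trace, Matrix.mul_apply, conjTranspose_apply, Complex.normSq_eq_conj_mul_self, mul_comm]

lemma all_zero_of_sum_trace (n d : ℕ) (C : Fin n → Matrix (Fin d) (Fin d) ℂ)
    (h : ∑ i, trace ((C i)ᴴ * C i) = 0) : ∀ i, C i = 0 := by
  have key : ∑ i, (∑ j, ∑ k, Complex.normSq (C i k j)) = 0 := by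
    have : ((∑ i, ∑ j, ∑ k, Complex.normSq (C i k j) : ℝ) : ℂ) = 0 := by
      push_cast
      rw [← h]
      exact (Finset.sum_congr rfl fun i _ => by
        rw [trace_conj_normSq]; push_cast; ring).symm
    exact_mod_cast this
  have h1 : ∀ i ∈ Finset.univ, (0:ℝ) ≤ ∑ j, ∑ k, Complex.normSq (C i k j) := by
    intro i _
    exact Finset.sum_nonneg fun j _ => Finset.sum_nonneg fun k _ => Complex.normSq_nonneg _
  intro i
  have hi := (Finset.sum_eq_zero_iff_of_nonneg h1).mp key i (Finset.mem_univ i)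
  ext k j
  have h2 : ∀ j ∈ Finset.univ, (0:ℝ) ≤ ∑ k, Complex.normSq (C i k j) := by
    intro j _; exact Finset.sum_nonneg fun k _ => Complex.normSq_nonneg _
  have hj := (Finset.sum_eq_zero_iff_of_nonneg h2).mp hi j (Finset.mem_univ j)
  have h3 : ∀ k ∈ Finset.univ, (0:ℝ) ≤ Complex.normSq (C i k j) := fun k _ => Complex.normSq_nonneg _
  have hk := (Finset.sum_eq_zero_iff_of_nonneg h3).mp hj k (Finset.mem_univ k)
  simpa using Complex.normSq_eq_zero.mp hk

/-- For a unital quantum channel `Φ(X) = ∑ᵢ Kᵢ X Kᵢ*`, the fixed point set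
`Fix(Φ) = {X : Φ(X) = X}` equals the commutant `{Kᵢ}'` of the Kraus operators;
in particular `Fix(Φ)` is (the carrier of) a unital `*`-subalgebra of `M_d`. -/
theorem fixed_points_eq_commutant (d n : ℕ)
    (K : Fin n → Matrix (Fin d) (Fin d) ℂ)
    (Φ : Matrix (Fin d) (Fin d) ℂ → Matrix (Fin d) (Fin d) ℂ)
    (hΦ : ∀ Y, Φ Y = ∑ i, K i * Y * (K i)ᴴ)
    (htp : ∑ i, (K i)ᴴ * K i = 1)
    (hunital : ∑ i, K i * (K i)ᴴ = 1) :
    {X : Matrix (Fin d) (Fin d) ℂ | Φ X = X}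
        = {X : Matrix (Fin d) (Fin d) ℂ | ∀ i, K i * X = X * K i} ∧
    ∃ S : StarSubalgebra ℂ (Matrix (Fin d) (Fin d) ℂ),
      (S : Set (Matrix (Fin d) (Fin d) ℂ)) = {X | Φ X = X} := by
  -- the key equality of sets
  have main : {X : Matrix (Fin d) (Fin d) ℂ | Φ X = X}
      = {X : Matrix (Fin d) (Fin d) ℂ | ∀ i, K i * X = X * K i} := by
    ext X
    simp only [Set.mem_setOf_eq]
    constructor
    · intro hfix
      have hX : ∑ i, K i * X * (K i)ᴴ = X := by rw [← hΦ]; exact hfix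
      have hX' : ∑ i, K i * Xᴴ * (K i)ᴴ = Xᴴ := by
        have := congrArg conjTranspose hX
        simpa [conjTranspose_sum, conjTranspose_mul, Matrix.mul_assoc] using this
      set C : Fin n → Matrix (Fin d) (Fin d) ℂ := fun i => K i * X - X * K i with hC
      have T1 : ∑ i, trace ((K i * X)ᴴ * (K i * X)) = trace (X * Xᴴ) := by
        have e : ∀ i : Fin n, trace ((K i * X)ᴴ * (K i * X))
            = trace (X * Xᴴ * ((K i)ᴴ * K i)) := by
          intro i
          rw [conjTranspose_mul, show Xᴴ * (K i)ᴴ * (K i * X) = Xᴴ * ((K i)ᴴ * K i) * X by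
            simp [Matrix.mul_assoc], trace_mul_cycle]
        rw [Finset.sum_congr rfl fun i _ => e i, ← trace_sum, ← Finset.mul_sum, htp, mul_one]
      have T4 : ∑ i, trace ((X * K i)ᴴ * (X * K i)) = trace (Xᴴ * X) := by
        have e : ∀ i : Fin n, trace ((X * K i)ᴴ * (X * K i))
            = trace (Xᴴ * X * (K i * (K i)ᴴ)) := by
          intro i
          rw [conjTranspose_mul, show (K i)ᴴ * Xᴴ * (X * K i) = (K i)ᴴ * (Xᴴ * X) * K i by
            simp [Matrix.mul_assoc], trace_mul_cycle]
          exact trace_mul_comm _ _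
        rw [Finset.sum_congr rfl fun i _ => e i, ← trace_sum, ← Finset.mul_sum, hunital, mul_one]
      have T2 : ∑ i, trace ((K i * X)ᴴ * (X * K i)) = trace (Xᴴ * X) := by
        have e : ∀ i : Fin n, trace ((K i * X)ᴴ * (X * K i))
            = trace ((K i * Xᴴ * (K i)ᴴ) * X) := by
          intro i
          rw [conjTranspose_mul, show Xᴴ * (K i)ᴴ * (X * K i) = (Xᴴ * (K i)ᴴ * X) * K i by
            simp [Matrix.mul_assoc], trace_mul_comm]
          congr 1
          simp [Matrix.mul_assoc]
        rw [Finset.sum_congr rfl fun i _ => e i, ← trace_sum, ← Finset.sum_mul, hX']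
      have T3 : ∑ i, trace ((X * K i)ᴴ * (K i * X)) = trace (Xᴴ * X) := by
        have e : ∀ i : Fin n, trace ((X * K i)ᴴ * (K i * X))
            = trace (Xᴴ * (K i * X * (K i)ᴴ)) := by
          intro i
          rw [conjTranspose_mul, show (K i)ᴴ * Xᴴ * (K i * X) = (K i)ᴴ * (Xᴴ * (K i * X)) by
            simp [Matrix.mul_assoc], trace_mul_comm]
          congr 1
          simp [Matrix.mul_assoc]
        rw [Finset.sum_congr rfl fun i _ => e i, ← trace_sum, ← Finset.mul_sum, hX]
      have hzero : ∑ i, trace ((C i)ᴴ * C i) = 0 := by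
        have expand : ∀ i : Fin n, trace ((C i)ᴴ * C i)
            = trace ((K i * X)ᴴ * (K i * X)) - trace ((K i * X)ᴴ * (X * K i))
              - trace ((X * K i)ᴴ * (K i * X)) + trace ((X * K i)ᴴ * (X * K i)) := by
          intro i
          simp only [hC, conjTranspose_sub, Matrix.sub_mul, Matrix.mul_sub, trace_sub]
          ring
        rw [Finset.sum_congr rfl fun i _ => expand i]
        rw [Finset.sum_add_distrib, Finset.sum_sub_distrib, Finset.sum_sub_distrib,
          T1, T2, T3, T4, trace_mul_comm]
        ring
      have hCz := all_zero_of_sum_trace n d C hzero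
      intro i
      have := hCz i
      rw [hC] at this
      exact sub_eq_zero.mp this
    · intro hcomm
      rw [hΦ]
      calc ∑ i, K i * X * (K i)ᴴ = ∑ i, X * (K i * (K i)ᴴ) := by
            refine Finset.sum_congr rfl fun i _ => ?_
            rw [hcomm i, Matrix.mul_assoc]
        _ = X := by rw [← Finset.mul_sum, hunital, mul_one]
  refine ⟨main, ?_⟩
  -- the star subalgebra
  have hstar : ∀ X : Matrix (Fin d) (Fin d) ℂ, Φ X = X → Φ Xᴴ = Xᴴ := by
    intro X hX
    rw [hΦ] at hX ⊢
    have := congrArg conjTranspose hX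
    simpa [conjTranspose_sum, conjTranspose_mul, Matrix.mul_assoc] using this
  have hmul : ∀ a b : Matrix (Fin d) (Fin d) ℂ, Φ a = a → Φ b = b → Φ (a * b) = a * b := by
    intro a b ha hb
    have ha' : ∀ i, K i * a = a * K i := by
      have : a ∈ {X : Matrix (Fin d) (Fin d) ℂ | ∀ i, K i * X = X * K i} := main ▸ ha
      exact this
    have hb' : ∀ i, K i * b = b * K i := by
      have : b ∈ {X : Matrix (Fin d) (Fin d) ℂ | ∀ i, K i * X = X * K i} := main ▸ hb
      exact this
    have hab : ∀ i, K i * (a * b) = (a * b) * K i := by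
      intro i
      rw [← Matrix.mul_assoc, ha' i, Matrix.mul_assoc, hb' i, Matrix.mul_assoc]
    have : a * b ∈ {X : Matrix (Fin d) (Fin d) ℂ | Φ X = X} := main ▸ hab
    exact this
  have hadd : ∀ a b : Matrix (Fin d) (Fin d) ℂ, Φ a = a → Φ b = b → Φ (a + b) = a + b := by
    intro a b ha hb
    rw [hΦ] at ha hb ⊢
    simp only [Matrix.mul_add, Matrix.add_mul, Finset.sum_add_distrib, ha, hb]
  have halg : ∀ r : ℂ, Φ (algebraMap ℂ (Matrix (Fin d) (Fin d) ℂ) r) = algebraMap ℂ (Matrix (Fin d) (Fin d) ℂ) r := by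
    intro r
    rw [hΦ]
    simp only [Algebra.algebraMap_eq_smul_one, Matrix.mul_smul, Matrix.smul_mul, mul_one,
      one_mul, ← Finset.smul_sum, hunital]
  exact ⟨{ carrier := {X | Φ X = X}
           mul_mem' := fun ha hb => hmul _ _ ha hb
           add_mem' := fun ha hb => hadd _ _ ha hb
           algebraMap_mem' := halg
           star_mem' := fun hX => hstar _ hX }, rfl⟩
end
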